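/- For an admissible string s of length n, z(s) ≥ f_{n+1} if and only if the leading symbol s_n equals 1 (i.e., the string begins with *). -/
import Mathlib

open Finset

private lemma zeck_aux_lt (s : ℕ → Bool) (h : ∀ i, ¬(s i = true ∧ s (i+1) = true)) :
    ∀ m, (∑ i ∈ Finset.range m, if s i then Nat.fib (i+2) else 0) < Nat.fib (m+2) := by
  intro m
  induction m using Nat.strong_induction_on with
  | _ m ih =>
    match m with
    | 0 => simp [Nat.fib]
    | 1 =>
      simp only [Finset.sum_range_one]
      split <;> simp [Nat.fib]
    | (m+2) =>
      rw [Finset.sum_range_succ]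
      by_cases hm : s (m+1) = true
      · have hm0 : s m = false := by
          by_contra hc
          exact h m ⟨by simpa using hc, hm⟩
        rw [Finset.sum_range_succ, hm0, hm]
        simp only [if_true, Bool.false_eq_true, if_false, add_zero]
        have h1 := ih m (by omega)
        have hfib : Nat.fib (m+2+2) = Nat.fib (m+2) + Nat.fib (m+3) :=
          Nat.fib_add_two (n := m+2)
        have e1 : Nat.fib (m+2+1) = Nat.fib (m+3) := rfl
        have e2 : Nat.fib (m+1+2) = Nat.fib (m+3) := rfl
        omega
      · rw [if_neg hm, add_zero]
        have h1 := ih (m+1) (by omega)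
        have h2 : Nat.fib (m+1+2) ≤ Nat.fib (m+2+2) := Nat.fib_le_fib_succ
        have e1 : Nat.fib (m+1+2) = Nat.fib (m+3) := rfl
        omega

open Finset in
/-- For an admissible string `s` of length `n`, `z s ≥ f (n+1)` iff the leading
symbol `s_n` equals `1` (the string begins with `*`). -/
theorem zeckendorf_ge_iff_leading (n : ℕ) (hn : 0 < n) (s : Fin n → Bool)
    (hs : ∀ i j : Fin n, (j : ℕ) = (i : ℕ) + 1 → ¬(s i = true ∧ s j = true)) :
    Nat.fib (n + 1) ≤ (∑ i : Fin n, if s i then Nat.fib ((i : ℕ) + 2) else 0) ↔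
      s ⟨n - 1, by omega⟩ = true := by
  set s' : ℕ → Bool := fun i => if h : i < n then s ⟨i, h⟩ else false with hs'
  have hadj : ∀ i, ¬(s' i = true ∧ s' (i+1) = true) := by
    rintro i ⟨h1, h2⟩
    simp only [hs'] at h1 h2
    split at h2
    · next h' =>
      split at h1
      · exact hs _ _ rfl ⟨h1, h2⟩
      · omega
    · simp at h2
  have hsum : (∑ i : Fin n, if s i then Nat.fib ((i : ℕ) + 2) else 0)
      = ∑ i ∈ Finset.range n, if s' i then Nat.fib (i+2) else 0 := by
    rw [Finset.sum_range fun i => if s' i then Nat.fib (i+2) else 0]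
    refine Finset.sum_congr rfl fun i _ => ?_
    simp [hs', i.isLt]
  rw [hsum]
  constructor
  · intro hge
    by_contra hfalse
    have hf : s ⟨n - 1, by omega⟩ = false := by
      cases h : s ⟨n - 1, by omega⟩ <;> simp_all
    have hsf : s' (n-1) = false := by simp [hs', Nat.sub_lt hn one_pos, hf]
    have : (∑ i ∈ Finset.range n, if s' i then Nat.fib (i+2) else 0)
        = ∑ i ∈ Finset.range (n-1), if s' i then Nat.fib (i+2) else 0 := by
      have hn' : n = (n-1) + 1 := by omega
      rw [hn', Finset.sum_range_succ, hsf]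
      simp
    rw [this] at hge
    have hlt := zeck_aux_lt s' hadj (n-1)
    have heq : n - 1 + 2 = n + 1 := by omega
    rw [heq] at hlt
    omega
  · intro htrue
    have hsf : s' (n-1) = true := by
      simp only [hs']
      rw [dif_pos (Nat.sub_lt hn one_pos)]
      exact htrue
    calc Nat.fib (n+1) = (if s' (n-1) then Nat.fib ((n-1)+2) else 0) := by
          rw [hsf, if_pos rfl]
          congr 1
          omega
      _ ≤ _ := Finset.single_le_sum (f := fun i => if s' i then Nat.fib (i+2) else 0)
          (fun _ _ => Nat.zero_le _) (Finset.mem_range.mpr (by omega))
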